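/- Let φ(v) := e^{v²/2} on (−∞, V_F] and write ‖u‖_{L²(φ)}² := ∫_{−∞}^{V_F} u(v)² φ(v) dv. For every N_∞ > 0 there exists a constant C > 0, depending only on N_∞, b, V_R and V_F, such that for all N₁, N₂ ∈ [N_∞/2, 2N_∞]: ‖h(·,N₁) − h(·,N₂)‖_{L²(φ)} ≤ C |N₁ − N₂| and ‖∂_v h(·,N₁) − ∂_v h(·,N₂)‖_{L²(φ)} ≤ C |N₁ − N₂| (all these weighted norms being finite). -/

import Mathlib

open MeasureTheory Real Filter

/-- The function `I(N)` from the NNLIF model. -/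
noncomputable def Ifun (b V_R V_F N : ℝ) : ℝ :=
  ∫ v in Set.Iic V_F,
    Real.exp (-(v - b * N) ^ 2 / 2) * ∫ w in (max v V_R)..V_F, Real.exp ((w - b * N) ^ 2 / 2)

/-- The pseudo-equilibrium `h(·,N)` associated to a firing rate `N`. -/
noncomputable def pseudoEq (b V_R V_F N v : ℝ) : ℝ :=
  (1 / Ifun b V_R V_F N) * Real.exp (-(v - b * N) ^ 2 / 2) *
    ∫ w in (max v V_R)..V_F, Real.exp ((w - b * N) ^ 2 / 2)

/-!
Write `h(v, N) = I(N)⁻¹ G_N(v) J_N(v)` with `G_N(v) = e^{-(v-bN)²/2}` and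
`J_N(v) = ∫_{max(v,V_R)}^{V_F} e^{(w-bN)²/2} dw`; away from `V_R`,
`∂_v h = -(v - bN) h - 𝟙_{v > V_R} / I(N)`. For `N` in a compact set, each factor is bounded by,
and Lipschitz in `N` with constant, a multiple of a single weight `w(v)` (`WeightedLip`), and this
is stable under products, differences and integration in `v`. The weights are `1` for `J_N` and
for `1 / I(N)` (`I` is Lipschitz, hence continuous, and positive, so bounded below on a compact
set), `1 + |v|` for `v - bN` and `(1 + |v|) e^{-3v²/8}` for `G_N`. Hence `h` and `∂_v h` carry the
weights `(1 + |v|)^k e^{-3v²/8}`, `k = 1, 2`, whose squares are integrable against `e^{v²/2}`.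
-/

open Set Bornology

def WeightedLip {α : Type*} (S : Set ℝ) (T : Set α) (w : α → ℝ) (f : ℝ → α → ℝ) : Prop :=
  ∃ C ≥ 0, ∀ N₁ ∈ S, ∀ N₂ ∈ S, ∀ v ∈ T,
    |f N₁ v| ≤ C * w v ∧ |f N₁ v - f N₂ v| ≤ C * w v * |N₁ - N₂|

namespace WeightedLip

variable {α β : Type*} {S : Set ℝ} {T : Set α} {w w₁ w₂ : α → ℝ} {f g : ℝ → α → ℝ}

lemma mul (hf : WeightedLip S T w₁ f) (hg : WeightedLip S T w₂ g) :
    WeightedLip S T (w₁ * w₂) (fun N v => f N v * g N v) := by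
  obtain ⟨C₁, hC₁, hf⟩ := hf
  obtain ⟨C₂, hC₂, hg⟩ := hg
  refine ⟨2 * C₁ * C₂, by positivity, fun N₁ hN₁ N₂ hN₂ v hv => ?_⟩
  obtain ⟨hf₁, hf₁₂⟩ := hf N₁ hN₁ N₂ hN₂ v hv
  obtain ⟨hf₂, -⟩ := hf N₂ hN₂ N₁ hN₁ v hv
  obtain ⟨hg₁, hg₁₂⟩ := hg N₁ hN₁ N₂ hN₂ v hv
  have hw₁ : 0 ≤ C₁ * w₁ v := (abs_nonneg _).trans hf₁
  have hw₂ : 0 ≤ C₂ * w₂ v := (abs_nonneg _).trans hg₁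
  simp only [Pi.mul_apply]
  constructor
  · calc |f N₁ v * g N₁ v| = |f N₁ v| * |g N₁ v| := abs_mul _ _
      _ ≤ (C₁ * w₁ v) * (C₂ * w₂ v) := mul_le_mul hf₁ hg₁ (abs_nonneg _) hw₁
      _ ≤ 2 * C₁ * C₂ * (w₁ v * w₂ v) := by nlinarith [mul_nonneg hw₁ hw₂]
  · calc |f N₁ v * g N₁ v - f N₂ v * g N₂ v|
        = |(f N₁ v - f N₂ v) * g N₁ v + f N₂ v * (g N₁ v - g N₂ v)| := by ring_nf
      _ ≤ |f N₁ v - f N₂ v| * |g N₁ v| + |f N₂ v| * |g N₁ v - g N₂ v| := by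
        rw [← abs_mul, ← abs_mul]; exact abs_add_le _ _
      _ ≤ (C₁ * w₁ v * |N₁ - N₂|) * (C₂ * w₂ v) + (C₁ * w₁ v) * (C₂ * w₂ v * |N₁ - N₂|) := by
        gcongr
      _ = 2 * C₁ * C₂ * (w₁ v * w₂ v) * |N₁ - N₂| := by ring

lemma neg (hf : WeightedLip S T w f) : WeightedLip S T w (fun N v => -f N v) := by
  obtain ⟨C, hC, hf⟩ := hf
  refine ⟨C, hC, fun N₁ hN₁ N₂ hN₂ v hv => ?_⟩
  rw [abs_neg, neg_sub_neg, abs_sub_comm]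
  exact hf N₁ hN₁ N₂ hN₂ v hv

lemma sub (hf : WeightedLip S T w f) (hg : WeightedLip S T w g) :
    WeightedLip S T w (fun N v => f N v - g N v) := by
  obtain ⟨C₁, hC₁, hf⟩ := hf
  obtain ⟨C₂, hC₂, hg⟩ := hg
  refine ⟨C₁ + C₂, by positivity, fun N₁ hN₁ N₂ hN₂ v hv => ?_⟩
  obtain ⟨hf₁, hf₁₂⟩ := hf N₁ hN₁ N₂ hN₂ v hv
  obtain ⟨hg₁, hg₁₂⟩ := hg N₁ hN₁ N₂ hN₂ v hv
  constructor
  · calc |f N₁ v - g N₁ v| ≤ |f N₁ v| + |g N₁ v| := abs_sub _ _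
      _ ≤ (C₁ + C₂) * w v := by linarith
  · calc |f N₁ v - g N₁ v - (f N₂ v - g N₂ v)|
        = |(f N₁ v - f N₂ v) - (g N₁ v - g N₂ v)| := by ring_nf
      _ ≤ |f N₁ v - f N₂ v| + |g N₁ v - g N₂ v| := abs_sub _ _
      _ ≤ (C₁ + C₂) * w v * |N₁ - N₂| := by linarith

lemma mono {w' : α → ℝ} {K : ℝ} (hf : WeightedLip S T w f) (hK : 0 ≤ K)
    (hw : ∀ v ∈ T, w v ≤ K * w' v) : WeightedLip S T w' f := by
  obtain ⟨C, hC, hf⟩ := hf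
  refine ⟨C * K, by positivity, fun N₁ hN₁ N₂ hN₂ v hv => ?_⟩
  obtain ⟨hf₁, hf₁₂⟩ := hf N₁ hN₁ N₂ hN₂ v hv
  have hCw : C * w v ≤ C * K * w' v := by
    rw [mul_assoc]; exact mul_le_mul_of_nonneg_left (hw v hv) hC
  exact ⟨hf₁.trans hCw, hf₁₂.trans (mul_le_mul_of_nonneg_right hCw (abs_nonneg _))⟩

lemma comp {T' : Set β} {e : β → α} (hf : WeightedLip S T w f) (he : MapsTo e T' T) :
    WeightedLip S T' (w ∘ e) (fun N v => f N (e v)) := by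
  obtain ⟨C, hC, hf⟩ := hf
  exact ⟨C, hC, fun N₁ hN₁ N₂ hN₂ v hv => hf N₁ hN₁ N₂ hN₂ (e v) (he hv)⟩

lemma indicator (hf : WeightedLip S T w f) (s : Set α) :
    WeightedLip S T (s.indicator w) (fun N => s.indicator (f N)) := by
  obtain ⟨C, hC, hf⟩ := hf
  refine ⟨C, hC, fun N₁ hN₁ N₂ hN₂ v hv => ?_⟩
  by_cases hs : v ∈ s
  · simpa only [indicator_of_mem hs] using hf N₁ hN₁ N₂ hN₂ v hv
  · simp [indicator_of_notMem hs]

lemma one_div {δ : ℝ} (hf : WeightedLip S T 1 f) (hδ : 0 < δ)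
    (hfδ : ∀ N ∈ S, ∀ v ∈ T, δ ≤ f N v) : WeightedLip S T 1 (fun N v => 1 / f N v) := by
  obtain ⟨C, hC, hf⟩ := hf
  refine ⟨max (1 / δ) (C / δ ^ 2), by positivity, fun N₁ hN₁ N₂ hN₂ v hv => ?_⟩
  have h₁ := hfδ N₁ hN₁ v hv
  have h₂ := hfδ N₂ hN₂ v hv
  have hpos₁ : 0 < f N₁ v := hδ.trans_le h₁
  have hpos₂ : 0 < f N₂ v := hδ.trans_le h₂
  simp only [Pi.one_apply, mul_one]
  constructor
  · rw [abs_of_pos (one_div_pos.2 hpos₁)]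
    exact (one_div_le_one_div_of_le hδ h₁).trans (le_max_left _ _)
  · have hlip := (hf N₁ hN₁ N₂ hN₂ v hv).2
    rw [Pi.one_apply, mul_one] at hlip
    calc |1 / f N₁ v - 1 / f N₂ v| = |f N₁ v - f N₂ v| / (f N₁ v * f N₂ v) := by
          rw [div_sub_div _ _ hpos₁.ne' hpos₂.ne', abs_div, abs_sub_comm,
            abs_of_pos (mul_pos hpos₁ hpos₂)]
          ring_nf
      _ ≤ C * |N₁ - N₂| / δ ^ 2 :=
          div_le_div₀ (by positivity) hlip (by positivity) (by nlinarith)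
      _ ≤ max (1 / δ) (C / δ ^ 2) * |N₁ - N₂| := by
          rw [mul_div_right_comm]
          gcongr
          exact le_max_right _ _

lemma continuousOn {v : α} (hf : WeightedLip S T w f) (hv : v ∈ T) :
    ContinuousOn (fun N => f N v) S := by
  obtain ⟨C, -, hf⟩ := hf
  refine (LipschitzOnWith.of_dist_le_mul fun N₁ hN₁ N₂ hN₂ => ?_).continuousOn
    (K := Real.toNNReal (C * w v))
  rw [Real.dist_eq, Real.dist_eq, Real.coe_toNNReal']
  exact (hf N₁ hN₁ N₂ hN₂ v hv).2.trans
    (mul_le_mul_of_nonneg_right (le_max_left _ _) (abs_nonneg _))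


lemma intervalIntegral_left {f : ℝ → ℝ → ℝ} {a c : ℝ}
    (hf : WeightedLip S (Icc a c) 1 f) (hint : ∀ N ∈ S, IntervalIntegrable (f N) volume a c) :
    WeightedLip S (Icc a c) 1 (fun N x => ∫ w in x..c, f N w) := by
  obtain ⟨C, hC, hf⟩ := hf
  refine ⟨C * |c - a|, by positivity, fun N₁ hN₁ N₂ hN₂ x hx => ?_⟩
  have hsub : ∀ w ∈ uIoc x c, w ∈ Icc a c := fun w hw => by
    rw [uIoc_of_le hx.2] at hw; exact ⟨hx.1.trans hw.1.le, hw.2⟩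
  have hlen : |c - x| ≤ |c - a| := by
    rw [abs_of_nonneg (sub_nonneg.2 hx.2), abs_of_nonneg (by linarith [hx.1, hx.2])]
    linarith [hx.1]
  have hint' : ∀ N ∈ S, IntervalIntegrable (f N) volume x c := fun N hN =>
    (hint N hN).mono_set (by
      rw [uIcc_of_le hx.2, uIcc_of_le (hx.1.trans hx.2)]; exact Icc_subset_Icc_left hx.1)
  simp only [Pi.one_apply, mul_one] at hf ⊢
  constructor
  · refine (intervalIntegral.norm_integral_le_of_norm_le_const (f := f N₁) fun w hw =>
      (hf N₁ hN₁ N₂ hN₂ w (hsub w hw)).1).trans ?_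
    exact mul_le_mul_of_nonneg_left hlen hC
  · rw [← intervalIntegral.integral_sub (hint' N₁ hN₁) (hint' N₂ hN₂)]
    refine (intervalIntegral.norm_integral_le_of_norm_le_const
      (f := fun w => f N₁ w - f N₂ w) fun w hw =>
      (hf N₁ hN₁ N₂ hN₂ w (hsub w hw)).2).trans ?_
    rw [mul_right_comm]
    exact mul_le_mul_of_nonneg_right (mul_le_mul_of_nonneg_left hlen hC) (abs_nonneg _)

variable [MeasurableSpace α] {μ : Measure α}

lemma integrableOn (hf : WeightedLip S T w f) (hw : IntegrableOn w T μ)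
    (hmeas : ∀ N ∈ S, AEStronglyMeasurable (f N) (μ.restrict T)) (hT : MeasurableSet T)
    {N : ℝ} (hN : N ∈ S) : IntegrableOn (f N) T μ := by
  obtain ⟨C, -, hf⟩ := hf
  refine (hw.const_mul C).mono' (hmeas N hN) ?_
  filter_upwards [ae_restrict_mem hT] with v hv using (hf N hN N hN v hv).1

lemma integral (hf : WeightedLip S T w f) (hw : IntegrableOn w T μ)
    (hmeas : ∀ N ∈ S, AEStronglyMeasurable (f N) (μ.restrict T)) (hT : MeasurableSet T)
    (T' : Set β) : WeightedLip S T' 1 (fun N _ => ∫ v in T, f N v ∂μ) := by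
  have hint : ∀ {N}, N ∈ S → IntegrableOn (f N) T μ := hf.integrableOn hw hmeas hT
  obtain ⟨C, hC, hf⟩ := hf
  refine ⟨C * ∫ v in T, |w v| ∂μ, by positivity, fun N₁ hN₁ N₂ hN₂ _ _ => ?_⟩
  simp only [Pi.one_apply, mul_one]
  constructor
  · rw [← integral_const_mul]
    refine norm_integral_le_of_norm_le (f := f N₁) (hw.norm.const_mul C) ?_
    filter_upwards [ae_restrict_mem hT] with v hv
    exact (hf N₁ hN₁ N₂ hN₂ v hv).1.trans
      (mul_le_mul_of_nonneg_left (le_abs_self _) hC)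
  · rw [← integral_sub (hint hN₁) (hint hN₂), mul_right_comm, ← integral_const_mul]
    refine norm_integral_le_of_norm_le (f := fun v => f N₁ v - f N₂ v)
      (hw.norm.const_mul _) ?_
    filter_upwards [ae_restrict_mem hT] with v hv
    refine (hf N₁ hN₁ N₂ hN₂ v hv).2.trans ?_
    rw [mul_right_comm]
    exact mul_le_mul_of_nonneg_left (le_abs_self _) (by positivity)

lemma exists_sqrt_integral_sq_le {φ : α → ℝ} {f' : ℝ → α → ℝ} (hf : WeightedLip S T w f)
    (hT : MeasurableSet T) (hmeas : ∀ N ∈ S, AEStronglyMeasurable (f N) (μ.restrict T))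
    (hf' : ∀ N ∈ S, f' N =ᵐ[μ.restrict T] f N)
    (hφm : AEStronglyMeasurable φ (μ.restrict T)) (hφ : ∀ v ∈ T, 0 ≤ φ v)
    (hw : IntegrableOn (fun v => w v ^ 2 * φ v) T μ) :
    ∃ C, ∀ N₁ ∈ S, ∀ N₂ ∈ S,
      IntegrableOn (fun v => (f' N₁ v - f' N₂ v) ^ 2 * φ v) T μ ∧
      √(∫ v in T, (f' N₁ v - f' N₂ v) ^ 2 * φ v ∂μ) ≤ C * |N₁ - N₂| := by
  obtain ⟨C, hC, hf⟩ := hf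
  refine ⟨C * √(∫ v in T, w v ^ 2 * φ v ∂μ), fun N₁ hN₁ N₂ hN₂ => ?_⟩
  have hbound : ∀ᵐ v ∂μ.restrict T, (f' N₁ v - f' N₂ v) ^ 2 * φ v
      ≤ (C * |N₁ - N₂|) ^ 2 * (w v ^ 2 * φ v) := by
    filter_upwards [ae_restrict_mem hT, hf' N₁ hN₁, hf' N₂ hN₂] with v hv h₁ h₂
    rw [h₁, h₂, ← sq_abs (f N₁ v - f N₂ v)]
    calc |f N₁ v - f N₂ v| ^ 2 * φ v ≤ (C * w v * |N₁ - N₂|) ^ 2 * φ v := by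
          gcongr
          exacts [hφ v hv, (hf N₁ hN₁ N₂ hN₂ v hv).2]
      _ = (C * |N₁ - N₂|) ^ 2 * (w v ^ 2 * φ v) := by ring
  have hint : IntegrableOn (fun v => (f' N₁ v - f' N₂ v) ^ 2 * φ v) T μ := by
    refine (hw.const_mul ((C * |N₁ - N₂|) ^ 2)).mono' ?_ ?_
    · exact ((((hmeas N₁ hN₁).congr (hf' N₁ hN₁).symm).sub
        ((hmeas N₂ hN₂).congr (hf' N₂ hN₂).symm)).pow 2).mul hφm
    · filter_upwards [ae_restrict_mem hT, hbound] with v hv h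
      rw [Real.norm_of_nonneg (mul_nonneg (sq_nonneg _) (hφ v hv))]
      exact h
  refine ⟨hint, ?_⟩
  calc √(∫ v in T, (f' N₁ v - f' N₂ v) ^ 2 * φ v ∂μ)
      ≤ √((C * |N₁ - N₂|) ^ 2 * ∫ v in T, w v ^ 2 * φ v ∂μ) := by
        rw [← integral_const_mul]
        exact Real.sqrt_le_sqrt (integral_mono_ae hint (hw.const_mul _) hbound)
    _ = C * √(∫ v in T, w v ^ 2 * φ v ∂μ) * |N₁ - N₂| := by
        rw [Real.sqrt_mul (sq_nonneg _), Real.sqrt_sq (by positivity)]; ring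

end WeightedLip

lemma abs_exp_sub_exp_le {x y K : ℝ} (hx : x ≤ K) (hy : y ≤ K) :
    |exp x - exp y| ≤ exp K * |x - y| := by
  simpa only [Real.norm_eq_abs] using (convex_Iic K).norm_image_sub_le_of_norm_deriv_le
    (fun _ _ => differentiableAt_exp) (fun z hz => by simpa using exp_le_exp.2 hz) hy hx

lemma abs_sq_div_two_sub_sq_div_two_le {x a₁ a₂ R : ℝ} (h₁ : |x - a₁| ≤ R) (h₂ : |x - a₂| ≤ R) :
    |(x - a₁) ^ 2 / 2 - (x - a₂) ^ 2 / 2| ≤ R * |a₁ - a₂| := by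
  rw [← sub_div, sq_sub_sq, abs_div, abs_mul, sub_sub_sub_cancel_left, abs_sub_comm a₂, abs_two]
  have := (abs_add_le (x - a₁) (x - a₂)).trans (add_le_add h₁ h₂)
  nlinarith [abs_nonneg (a₁ - a₂)]

lemma Bornology.IsBounded.exists_abs_mul_le {S : Set ℝ} (hS : IsBounded S) (b : ℝ) :
    ∃ B ≥ 0, ∀ N ∈ S, |b * N| ≤ B := by
  obtain ⟨A, hA⟩ := hS.exists_norm_le
  refine ⟨|b| * |A|, by positivity, fun N hN => ?_⟩
  rw [abs_mul]
  exact mul_le_mul_of_nonneg_left ((hA N hN).trans (le_abs_self A)) (abs_nonneg b)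

lemma continuous_integral_max_left {f : ℝ → ℝ} (hf : Continuous f) (a c : ℝ) :
    Continuous fun x => ∫ w in max x a..c, f w := by
  simp_rw [intervalIntegral.integral_symm c]
  exact ((intervalIntegral.continuous_primitive (fun _ _ => hf.intervalIntegrable _ _) c).comp
    (continuous_id.max continuous_const)).neg

lemma hasDerivAt_integral_max_left {f : ℝ → ℝ} (hf : Continuous f) {a c x : ℝ} (hx : x ≠ a) :
    HasDerivAt (fun x => ∫ w in max x a..c, f w) (-(Ioi a).indicator f x) x := by
  rcases hx.lt_or_gt with hxa | hax
  · rw [indicator_of_notMem (notMem_Ioi.2 hxa.le), neg_zero]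
    refine (hasDerivAt_const x (∫ w in a..c, f w)).congr_of_eventuallyEq ?_
    filter_upwards [Iio_mem_nhds hxa] with y hy
    rw [max_eq_right (le_of_lt hy)]
  · rw [indicator_of_mem (mem_Ioi.2 hax)]
    refine (intervalIntegral.integral_hasDerivAt_left (hf.intervalIntegrable x c)
      (hf.stronglyMeasurableAtFilter _ _) hf.continuousAt).congr_of_eventuallyEq ?_
    filter_upwards [Ioi_mem_nhds hax] with y hy
    rw [max_eq_left (le_of_lt hy)]

lemma integrable_one_add_abs_pow_mul_exp_neg_mul_sq {c : ℝ} (hc : 0 < c) (n : ℕ) :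
    Integrable fun v : ℝ => (1 + |v|) ^ n * exp (-c * v ^ 2) := by
  have hpow : ∀ k : ℕ, Integrable fun v : ℝ => |v| ^ k * exp (-c * v ^ 2) := fun k => by
    simpa [abs_mul, abs_of_pos (exp_pos _)] using
      (integrable_rpow_mul_exp_neg_mul_sq hc (s := k) (by linarith [k.cast_nonneg (α := ℝ)])).norm
  simp_rw [add_comm (1 : ℝ), add_pow, one_pow, mul_one, Finset.sum_mul]
  exact integrable_finsetSum _ fun k _ => by
    simpa only [mul_right_comm _ (n.choose k : ℝ)] using (hpow k).mul_const _

/-- The exponent `3/8` is small enough that `e^{-(v-a)²/2} ≤ e^{3a²/2} e^{-3v²/8}`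
(as `(v - 4a)² ≥ 0`) and large enough that `gaussWeight n v ^ 2 * e^{v²/2}` still decays like
`e^{-v²/4}`. -/
noncomputable def gaussWeight (n : ℕ) (v : ℝ) : ℝ := (1 + |v|) ^ n * exp (-(3 / 8) * v ^ 2)

lemma integrable_gaussWeight (n : ℕ) : Integrable (gaussWeight n) :=
  integrable_one_add_abs_pow_mul_exp_neg_mul_sq (by norm_num) n

lemma integrable_gaussWeight_sq_mul_exp (n : ℕ) :
    Integrable fun v => gaussWeight n v ^ 2 * exp (v ^ 2 / 2) := by
  refine (integrable_one_add_abs_pow_mul_exp_neg_mul_sq (c := 1 / 4) (by norm_num) (2 * n)).congr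
    (ae_of_all _ fun v => ?_)
  simp only [gaussWeight, mul_pow, ← pow_mul, mul_assoc, ← exp_nat_mul, ← exp_add]
  ring_nf

lemma weightedLip_exp_neg_sq (b : ℝ) {S : Set ℝ} (hS : IsBounded S) (T : Set ℝ) :
    WeightedLip S T (gaussWeight 1) (fun N v => exp (-(v - b * N) ^ 2 / 2)) := by
  obtain ⟨B, hB, hbN⟩ := hS.exists_abs_mul_le b
  refine ⟨exp (3 * B ^ 2 / 2) * ((1 + |b|) * (1 + B)), by positivity,
    fun N₁ hN₁ N₂ hN₂ v _ => ?_⟩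
  have hdist : ∀ N ∈ S, |v - b * N| ≤ |v| + B := fun N hN =>
    (abs_sub _ _).trans (add_le_add_right (hbN N hN) _)
  have hexp : ∀ N ∈ S, -(v - b * N) ^ 2 / 2 ≤ 3 * B ^ 2 / 2 + -(3 / 8) * v ^ 2 := fun N hN => by
    nlinarith [sq_nonneg (v - 4 * (b * N)), sq_abs (b * N), abs_nonneg (b * N), hbN N hN]
  have hq : |-(v - b * N₁) ^ 2 / 2 - -(v - b * N₂) ^ 2 / 2| ≤ (|v| + B) * (|b| * |N₁ - N₂|) := by
    rw [neg_div, neg_div, neg_sub_neg, abs_sub_comm, ← abs_mul, mul_sub]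
    exact abs_sq_div_two_sub_sq_div_two_le (hdist N₁ hN₁) (hdist N₂ hN₂)
  have hv := abs_nonneg v
  have hb := abs_nonneg b
  have hpoly : (|v| + B) * |b| ≤ (1 + |b|) * (1 + B) * (1 + |v|) := by
    nlinarith [mul_nonneg (mul_nonneg hb hB) hv, mul_nonneg hB hv, mul_nonneg hb hv]
  have hpoly₁ : 1 ≤ (1 + |b|) * (1 + B) * (1 + |v|) := by
    nlinarith [mul_nonneg (mul_nonneg hb hB) hv, mul_nonneg hB hv, mul_nonneg hb hv,
      mul_nonneg hb hB]
  rw [gaussWeight, pow_one, abs_of_pos (exp_pos _)]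
  set E := exp (3 * B ^ 2 / 2) * exp (-(3 / 8) * v ^ 2)
  have hE : 0 ≤ E := by positivity
  refine ⟨(exp_le_exp.2 (hexp N₁ hN₁)).trans ?_,
    (abs_exp_sub_exp_le (hexp N₁ hN₁) (hexp N₂ hN₂)).trans ?_⟩
  · calc exp (3 * B ^ 2 / 2 + -(3 / 8) * v ^ 2) = E * 1 := by rw [exp_add, mul_one]
      _ ≤ E * ((1 + |b|) * (1 + B) * (1 + |v|)) := by gcongr
      _ = _ := by ring
  · calc _ ≤ E * ((|v| + B) * (|b| * |N₁ - N₂|)) := by rw [exp_add]; gcongr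
      _ = E * |N₁ - N₂| * ((|v| + B) * |b|) := by ring
      _ ≤ E * |N₁ - N₂| * ((1 + |b|) * (1 + B) * (1 + |v|)) := by gcongr
      _ = _ := by ring

lemma weightedLip_exp_sq (b : ℝ) {S T : Set ℝ} (hS : IsBounded S) (hT : IsBounded T) :
    WeightedLip S T 1 (fun N w => exp ((w - b * N) ^ 2 / 2)) := by
  obtain ⟨B, hB, hbN⟩ := hS.exists_abs_mul_le b
  obtain ⟨A, hA⟩ := hT.exists_norm_le
  set R := |A| + B
  have hR : ∀ N ∈ S, ∀ w ∈ T, |w - b * N| ≤ R := fun N hN w hw =>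
    (abs_sub _ _).trans (add_le_add ((hA w hw).trans (le_abs_self A)) (hbN N hN))
  have hexp : ∀ N ∈ S, ∀ w ∈ T, (w - b * N) ^ 2 / 2 ≤ R ^ 2 / 2 := fun N hN w hw => by
    have := sq_le_sq' (abs_le.1 (hR N hN w hw)).1 (abs_le.1 (hR N hN w hw)).2
    linarith
  have hbR : 0 ≤ |b| * R := by positivity
  refine ⟨exp (R ^ 2 / 2) * (1 + |b| * R), by positivity, fun N₁ hN₁ N₂ hN₂ w hw => ?_⟩
  simp only [Pi.one_apply, mul_one]
  rw [abs_of_pos (exp_pos _)]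
  refine ⟨(exp_le_exp.2 (hexp N₁ hN₁ w hw)).trans (le_mul_of_one_le_right (exp_pos _).le
    (by linarith)), (abs_exp_sub_exp_le (hexp N₁ hN₁ w hw) (hexp N₂ hN₂ w hw)).trans ?_⟩
  have hq := abs_sq_div_two_sub_sq_div_two_le (hR N₁ hN₁ w hw) (hR N₂ hN₂ w hw)
  rw [← mul_sub, abs_mul] at hq
  rw [mul_assoc]
  gcongr
  nlinarith [abs_nonneg (N₁ - N₂)]

lemma weightedLip_sub_mul (b : ℝ) {S : Set ℝ} (hS : IsBounded S) (T : Set ℝ) :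
    WeightedLip S T (fun v => 1 + |v|) (fun N v => v - b * N) := by
  obtain ⟨B, hB, hbN⟩ := hS.exists_abs_mul_le b
  refine ⟨(1 + |b|) * (1 + B), by positivity, fun N₁ hN₁ N₂ hN₂ v _ => ?_⟩
  have hv := abs_nonneg v
  have hb := abs_nonneg b
  beta_reduce
  constructor
  · calc |v - b * N₁| ≤ |v| + |b * N₁| := abs_sub _ _
      _ ≤ _ := by nlinarith [hbN N₁ hN₁, mul_nonneg (mul_nonneg hb hB) hv, mul_nonneg hB hv,
        mul_nonneg hb hv, mul_nonneg hb hB]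
  · rw [sub_sub_sub_cancel_left, ← mul_sub, abs_mul, abs_sub_comm]
    gcongr
    nlinarith [mul_nonneg (mul_nonneg hb hB) hv, mul_nonneg hB hv, mul_nonneg hb hv,
      mul_nonneg hb hB]

noncomputable def pseudoEqDeriv (b V_R V_F N v : ℝ) : ℝ :=
  -(v - b * N) * pseudoEq b V_R V_F N v - (Ioi V_R).indicator (fun _ => 1 / Ifun b V_R V_F N) v

section PseudoEquilibrium

variable {b V_R V_F : ℝ} {S : Set ℝ}

lemma continuous_Ifun_integrand (b V_R V_F N : ℝ) :
    Continuous fun v => exp (-(v - b * N) ^ 2 / 2) *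
      ∫ w in (max v V_R)..V_F, exp ((w - b * N) ^ 2 / 2) :=
  (by fun_prop : Continuous _).mul (continuous_integral_max_left (by fun_prop) _ _)

lemma weightedLip_integral_exp_sq (hV : V_R ≤ V_F) (hS : IsBounded S) :
    WeightedLip S (Iic V_F) 1
      (fun N v => ∫ w in (max v V_R)..V_F, exp ((w - b * N) ^ 2 / 2)) := by
  have hE := weightedLip_exp_sq b hS (Metric.isBounded_Icc V_R V_F)
  have hmax : MapsTo (fun v => max v V_R) (Iic V_F) (Icc V_R V_F) := fun v hv =>
    ⟨le_max_right _ _, max_le hv hV⟩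
  simpa using (hE.intervalIntegral_left fun N _ =>
    (by fun_prop : Continuous _).intervalIntegrable _ _).comp hmax

lemma weightedLip_Ifun_integrand (hV : V_R ≤ V_F) (hS : IsBounded S) :
    WeightedLip S (Iic V_F) (gaussWeight 1) (fun N v => exp (-(v - b * N) ^ 2 / 2) *
      ∫ w in (max v V_R)..V_F, exp ((w - b * N) ^ 2 / 2)) := by
  simpa using (weightedLip_exp_neg_sq b hS _).mul (weightedLip_integral_exp_sq hV hS)

lemma weightedLip_Ifun {α : Type*} (hV : V_R ≤ V_F) (hS : IsBounded S) (T : Set α) :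
    WeightedLip S T 1 (fun N _ => Ifun b V_R V_F N) :=
  (weightedLip_Ifun_integrand hV hS).integral (integrable_gaussWeight 1).integrableOn
    (fun N _ => (continuous_Ifun_integrand b V_R V_F N).aestronglyMeasurable) measurableSet_Iic T

lemma Ifun_pos (hV : V_R < V_F) (N : ℝ) : 0 < Ifun b V_R V_F N := by
  have hint := (weightedLip_Ifun_integrand (S := {N}) (b := b) hV.le
    isBounded_singleton).integrableOn (integrable_gaussWeight 1).integrableOn
    (fun N _ => (continuous_Ifun_integrand b V_R V_F N).aestronglyMeasurable) measurableSet_Iic rfl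
  rw [Ifun, setIntegral_pos_iff_support_of_nonneg_ae _ hint]
  · refine (measure_mono (s := Iio V_F) ?_).trans_lt' (by simp)
    intro v hv
    refine ⟨?_, mem_Iic.2 (le_of_lt hv)⟩
    exact (mul_pos (exp_pos _) (intervalIntegral.intervalIntegral_pos_of_pos_on
      ((by fun_prop : Continuous fun w => exp ((w - b * N) ^ 2 / 2)).intervalIntegrable _ _)
      (fun w _ => exp_pos _) (max_lt hv hV))).ne'
  · filter_upwards [ae_restrict_mem measurableSet_Iic] with v hv
    exact mul_nonneg (exp_pos _).le
      (intervalIntegral.integral_nonneg (max_le hv hV.le) fun w _ => (exp_pos _).le)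

lemma exists_pos_le_Ifun (hV : V_R < V_F) (hS : IsCompact S) :
    ∃ δ > 0, ∀ N ∈ S, δ ≤ Ifun b V_R V_F N :=
  hS.exists_forall_le' ((weightedLip_Ifun hV.le hS.isBounded (univ : Set ℝ)).continuousOn
    (mem_univ 0)) fun N _ => Ifun_pos hV N

lemma weightedLip_one_div_Ifun {α : Type*} (hV : V_R < V_F) (hS : IsCompact S) (T : Set α) :
    WeightedLip S T 1 (fun N _ => 1 / Ifun b V_R V_F N) := by
  obtain ⟨δ, hδ, hδS⟩ := exists_pos_le_Ifun hV hS
  exact (weightedLip_Ifun hV.le hS.isBounded T).one_div hδ fun N hN _ _ => hδS N hN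

lemma weightedLip_pseudoEq (hV : V_R < V_F) (hS : IsCompact S) :
    WeightedLip S (Iic V_F) (gaussWeight 1) (pseudoEq b V_R V_F) := by
  unfold pseudoEq
  simpa only [one_mul, mul_one] using ((weightedLip_one_div_Ifun hV hS (Iic V_F)).mul
    (weightedLip_exp_neg_sq b hS.isBounded _)).mul (weightedLip_integral_exp_sq hV.le hS.isBounded)

lemma continuous_pseudoEq (b V_R V_F N : ℝ) : Continuous (pseudoEq b V_R V_F N) :=
  (continuous_const.mul (by fun_prop)).mul (continuous_integral_max_left (by fun_prop) _ _)

lemma hasDerivAt_pseudoEq {N v : ℝ} (hv : v ≠ V_R) :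
    HasDerivAt (pseudoEq b V_R V_F N) (pseudoEqDeriv b V_R V_F N v) v := by
  have hG : HasDerivAt (fun v => exp (-(v - b * N) ^ 2 / 2))
      (exp (-(v - b * N) ^ 2 / 2) * -(v - b * N)) v := by
    convert ((((hasDerivAt_id' v).sub_const (b * N)).fun_pow 2).fun_neg.div_const 2).exp using 1
    ring
  have hJ := hasDerivAt_integral_max_left (a := V_R) (c := V_F)
    (by fun_prop : Continuous fun w => exp ((w - b * N) ^ 2 / 2)) hv
  refine ((hG.const_mul (1 / Ifun b V_R V_F N)).fun_mul hJ).congr_deriv ?_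
  have hGE : exp (-(v - b * N) ^ 2 / 2) * exp ((v - b * N) ^ 2 / 2) = 1 := by
    rw [← exp_add, neg_div, neg_add_cancel, exp_zero]
  rw [pseudoEqDeriv, pseudoEq]
  by_cases h : v ∈ Ioi V_R
  · simp only [indicator_of_mem h]
    linear_combination (-1 / Ifun b V_R V_F N) * hGE
  · simp only [indicator_of_notMem h]
    ring

lemma deriv_pseudoEq_ae_eq (b V_R V_F N : ℝ) :
    deriv (pseudoEq b V_R V_F N) =ᵐ[volume] pseudoEqDeriv b V_R V_F N := by
  filter_upwards [volume.ae_ne V_R] with v hv using (hasDerivAt_pseudoEq hv).deriv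

lemma measurable_pseudoEqDeriv (b V_R V_F N : ℝ) : Measurable (pseudoEqDeriv b V_R V_F N) :=
  ((continuous_id.sub continuous_const).neg.mul (continuous_pseudoEq b V_R V_F N)).measurable.sub
    (measurable_const.indicator measurableSet_Ioi)

lemma weightedLip_pseudoEqDeriv (hV : V_R < V_F) (hS : IsCompact S) :
    WeightedLip S (Iic V_F) (gaussWeight 2) (pseudoEqDeriv b V_R V_F) := by
  have hdrift : WeightedLip S (Iic V_F) (gaussWeight 2)
      (fun N v => -(v - b * N) * pseudoEq b V_R V_F N v) :=
    ((weightedLip_sub_mul b hS.isBounded _).neg.mul (weightedLip_pseudoEq hV hS)).mono zero_le_one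
      fun v _ => le_of_eq (by simp only [Pi.mul_apply, gaussWeight]; ring)
  have hjump : WeightedLip S (Iic V_F) (gaussWeight 2)
      (fun N => (Ioi V_R).indicator fun _ => 1 / Ifun b V_R V_F N) := by
    refine ((weightedLip_one_div_Ifun hV hS _).indicator (Ioi V_R)).mono
      (exp_pos ((3 / 8) * (V_R ^ 2 + V_F ^ 2))).le fun v hv => ?_
    by_cases h : v ∈ Ioi V_R
    · rw [indicator_of_mem h, Pi.one_apply, gaussWeight, mul_left_comm, ← exp_add]
      have hv2 : v ^ 2 ≤ V_R ^ 2 + V_F ^ 2 := by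
        have := mem_Iic.1 hv; have := mem_Ioi.1 h
        rcases le_total 0 v with h0 | h0 <;> nlinarith
      exact one_le_mul_of_one_le_of_one_le (one_le_pow₀ (by linarith [abs_nonneg v]))
        (one_le_exp (by nlinarith))
    · rw [indicator_of_notMem h]
      exact mul_nonneg (exp_pos _).le (by unfold gaussWeight; positivity)
  exact hdrift.sub hjump

end PseudoEquilibrium

theorem pseudoEq_lipschitz_L2_general (b V_R V_F : ℝ) (hV : V_R < V_F)
    (Ninf : ℝ) :
    ∃ C : ℝ, 0 < C ∧
      ∀ N₁ ∈ Set.Icc (Ninf / 2) (2 * Ninf), ∀ N₂ ∈ Set.Icc (Ninf / 2) (2 * Ninf),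
        IntegrableOn
          (fun v => (pseudoEq b V_R V_F N₁ v - pseudoEq b V_R V_F N₂ v) ^ 2 *
            Real.exp (v ^ 2 / 2)) (Set.Iic V_F) ∧
        IntegrableOn
          (fun v => (deriv (pseudoEq b V_R V_F N₁) v - deriv (pseudoEq b V_R V_F N₂) v) ^ 2 *
            Real.exp (v ^ 2 / 2)) (Set.Iic V_F) ∧
        Real.sqrt (∫ v in Set.Iic V_F,
            (pseudoEq b V_R V_F N₁ v - pseudoEq b V_R V_F N₂ v) ^ 2 *
              Real.exp (v ^ 2 / 2)) ≤ C * |N₁ - N₂| ∧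
        Real.sqrt (∫ v in Set.Iic V_F,
            (deriv (pseudoEq b V_R V_F N₁) v - deriv (pseudoEq b V_R V_F N₂) v) ^ 2 *
              Real.exp (v ^ 2 / 2)) ≤ C * |N₁ - N₂| := by
  have hS : IsCompact (Icc (Ninf / 2) (2 * Ninf)) := isCompact_Icc
  have hφ : AEStronglyMeasurable (fun v : ℝ => exp (v ^ 2 / 2)) (volume.restrict (Iic V_F)) :=
    (by fun_prop : Continuous fun v : ℝ => exp (v ^ 2 / 2)).aestronglyMeasurable
  obtain ⟨C₁, h₁⟩ := (weightedLip_pseudoEq (b := b) hV hS).exists_sqrt_integral_sq_le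
    measurableSet_Iic (fun N _ => (continuous_pseudoEq b V_R V_F N).aestronglyMeasurable)
    (fun _ _ => ae_eq_refl _) hφ (fun v _ => (exp_pos _).le)
    (integrable_gaussWeight_sq_mul_exp 1).integrableOn
  obtain ⟨C₂, h₂⟩ := (weightedLip_pseudoEqDeriv (b := b) hV hS).exists_sqrt_integral_sq_le
    measurableSet_Iic (fun N _ => (measurable_pseudoEqDeriv b V_R V_F N).aestronglyMeasurable)
    (fun N _ => ae_restrict_of_ae (deriv_pseudoEq_ae_eq b V_R V_F N)) hφ
    (fun v _ => (exp_pos _).le) (integrable_gaussWeight_sq_mul_exp 2).integrableOn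
  refine ⟨max (max C₁ C₂) 1, by positivity, fun N₁ hN₁ N₂ hN₂ => ?_⟩
  obtain ⟨hint₁, hle₁⟩ := h₁ N₁ hN₁ N₂ hN₂
  obtain ⟨hint₂, hle₂⟩ := h₂ N₁ hN₁ N₂ hN₂
  exact ⟨hint₁, hint₂, hle₁.trans (by gcongr; exact le_max_of_le_left (le_max_left _ _)),
    hle₂.trans (by gcongr; exact le_max_of_le_left (le_max_right _ _))⟩

/-- Lipschitz dependence of the pseudo-equilibrium and of its `v`-derivative on
`N ∈ [N_∞/2, 2N_∞]`, in the weighted `L²(φ)` norm with weight `φ(v) = e^{v²/2}` on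
`(−∞, V_F]`; in particular all these weighted norms are finite. -/
theorem pseudoEq_lipschitz_L2 (b V_R V_F : ℝ) (hV : V_R < V_F)
    (Ninf : ℝ) (hNinf : 0 < Ninf) :
    ∃ C : ℝ, 0 < C ∧
      ∀ N₁ ∈ Set.Icc (Ninf / 2) (2 * Ninf), ∀ N₂ ∈ Set.Icc (Ninf / 2) (2 * Ninf),
        IntegrableOn
          (fun v => (pseudoEq b V_R V_F N₁ v - pseudoEq b V_R V_F N₂ v) ^ 2 *
            Real.exp (v ^ 2 / 2)) (Set.Iic V_F) ∧
        IntegrableOn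
          (fun v => (deriv (pseudoEq b V_R V_F N₁) v - deriv (pseudoEq b V_R V_F N₂) v) ^ 2 *
            Real.exp (v ^ 2 / 2)) (Set.Iic V_F) ∧
        Real.sqrt (∫ v in Set.Iic V_F,
            (pseudoEq b V_R V_F N₁ v - pseudoEq b V_R V_F N₂ v) ^ 2 *
              Real.exp (v ^ 2 / 2)) ≤ C * |N₁ - N₂| ∧
        Real.sqrt (∫ v in Set.Iic V_F,
            (deriv (pseudoEq b V_R V_F N₁) v - deriv (pseudoEq b V_R V_F N₂) v) ^ 2 *
              Real.exp (v ^ 2 / 2)) ≤ C * |N₁ - N₂| :=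
  pseudoEq_lipschitz_L2_general b V_R V_F hV Ninf
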